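/- Let E : ℝ² → ℝ be twice continuously differentiable (C²). Then for all i, j ∈ {1,2,3} and every point p = (x,y,z) ∈ ℝ³, the iterated Lie bracket satisfies [f_i, [f₀, f_j]](p) = (Δ_{ij}E)(x,y) · B, where Δ_{ij}E = γ₁ᵢγ₁ⱼ ∂²E/∂x² + (γ₁ᵢγ₂ⱼ + γ₁ⱼγ₂ᵢ) ∂²E/∂x∂y + γ₂ᵢγ₂ⱼ ∂²E/∂y². -/

import Mathlib

/-!
Brackets with constant vector fields are directional derivatives: `[V, c] = -DV · c` and
`[c, W] = DW · c`, so `[f_i, [f₀, f_j]](p) = -D²f₀(p)(c_i, c_j)` for the constant fields `c_i`.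
Writing `f₀ = a + L + (E ∘ π) • w` with `L` linear, `π (x, y, z) = (x, y)` and `w = -B`, only the
last term has a second derivative, namely `D²E(π p)(π c_i, π c_j) • w`; expanding it in the
coordinate basis and using the symmetry of `D²E` (Schwarz) gives `Δ_{ij}E`.
-/

open VectorField

/-- Partial derivative with respect to the first variable. -/
noncomputable def pdx (E : ℝ × ℝ → ℝ) (q : ℝ × ℝ) : ℝ := fderiv ℝ E q (1, 0)

/-- Partial derivative with respect to the second variable. -/
noncomputable def pdy (E : ℝ × ℝ → ℝ) (q : ℝ × ℝ) : ℝ := fderiv ℝ E q (0, 1)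

section

variable {𝕜 : Type*} [NontriviallyNormedField 𝕜]
  {E : Type*} [NormedAddCommGroup E] [NormedSpace 𝕜 E]
  {F : Type*} [NormedAddCommGroup F] [NormedSpace 𝕜 F]
  {G : Type*} [NormedAddCommGroup G] [NormedSpace 𝕜 G]

theorem fderiv_clm_apply_const_apply {c : E → F →L[𝕜] G} {x : E} (hc : DifferentiableAt 𝕜 c x)
    (u : F) (v : E) : fderiv 𝕜 (fun y => c y u) x v = fderiv 𝕜 c x v u := by
  simp [fderiv_clm_apply hc (differentiableAt_const u)]

theorem lieBracket_const_left (c : E) (W : E → E) (x : E) :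
    lieBracket 𝕜 (fun _ => c) W x = fderiv 𝕜 W x c := by
  simp [lieBracket]

theorem lieBracket_const_right (V : E → E) (c : E) :
    lieBracket 𝕜 V (fun _ => c) = fun x => -fderiv 𝕜 V x c := by
  ext1 x
  simp [lieBracket]

theorem lieBracket_const_lieBracket_const (V : E → E) (c d x : E) :
    lieBracket 𝕜 (fun _ => c) (lieBracket 𝕜 V (fun _ => d)) x =
      -fderiv 𝕜 (fun y => fderiv 𝕜 V y d) x c := by
  rw [lieBracket_const_right, lieBracket_const_left, fderiv_fun_neg]
  rfl

theorem fderiv_affine_add_smul_apply {g : F → 𝕜} (a w : E) (L : E →L[𝕜] E) (π : E →L[𝕜] F)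
    {y : E} (hg : DifferentiableAt 𝕜 g (π y)) (d : E) :
    fderiv 𝕜 (fun y => a + L y + g (π y) • w) y d = L d + fderiv 𝕜 g (π y) (π d) • w := by
  have hV : HasFDerivAt (fun y => a + L y + g (π y) • w)
      (L + ((fderiv 𝕜 g (π y)).comp π).smulRight w) y :=
    ((L.hasFDerivAt.const_add a).add ((hg.hasFDerivAt.comp y π.hasFDerivAt).smul_const w))
  simp [hV.fderiv]

theorem lieBracket_const_lieBracket_affine_add_smul {g : F → 𝕜} (hg : ContDiff 𝕜 2 g)
    (a w : E) (L : E →L[𝕜] E) (π : E →L[𝕜] F) (c d x : E) :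
    lieBracket 𝕜 (fun _ => c) (lieBracket 𝕜 (fun y => a + L y + g (π y) • w) (fun _ => d)) x =
      -(fderiv 𝕜 (fderiv 𝕜 g) (π x) (π c) (π d) • w) := by
  have hg₁ : Differentiable 𝕜 g := hg.differentiable (by norm_num)
  have hg₂ : Differentiable 𝕜 (fderiv 𝕜 g) :=
    (hg.fderiv_right (m := 1) (by norm_num)).differentiable one_ne_zero
  have hdir : (fun y => fderiv 𝕜 (fun y => a + L y + g (π y) • w) y d) =
      fun y => L d + fderiv 𝕜 g (π y) (π d) • w := by
    ext1 y; exact fderiv_affine_add_smul_apply a w L π (hg₁ _) d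
  have hD : HasFDerivAt (fun y => L d + fderiv 𝕜 g (π y) (π d) • w)
      ((((fderiv 𝕜 (fderiv 𝕜 g) (π x)).comp π).flip (π d)).smulRight w) x := by
    simpa using ((((hg₂ (π x)).hasFDerivAt.comp x π.hasFDerivAt).clm_apply
      (hasFDerivAt_const (π d) x)).smul_const w).const_add (L d)
  rw [lieBracket_const_lieBracket_const, hdir, hD.fderiv]
  simp

end

theorem fderiv_fderiv_apply_eq_pdx_pdy {g : ℝ × ℝ → ℝ} (hg : ContDiff ℝ 2 g) (q u v : ℝ × ℝ) :
    fderiv ℝ (fderiv ℝ g) q u v = u.1 * v.1 * pdx (pdx g) q +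
      (u.1 * v.2 + v.1 * u.2) * pdy (pdx g) q + u.2 * v.2 * pdy (pdy g) q := by
  have hg₂ : DifferentiableAt ℝ (fderiv ℝ g) q :=
    (hg.fderiv_right (m := 1) (by norm_num)).differentiable one_ne_zero q
  have hsymm := (hg.contDiffAt (x := q)).isSymmSndFDerivAt (by simp)
  have hbasis (a b : ℝ) : ((a, b) : ℝ × ℝ) = a • (1, 0) + b • (0, 1) := by simp
  have hxx : pdx (pdx g) q = fderiv ℝ (fderiv ℝ g) q (1, 0) (1, 0) :=
    fderiv_clm_apply_const_apply hg₂ _ _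
  have hxy : pdy (pdx g) q = fderiv ℝ (fderiv ℝ g) q (0, 1) (1, 0) :=
    fderiv_clm_apply_const_apply hg₂ _ _
  have hyy : pdy (pdy g) q = fderiv ℝ (fderiv ℝ g) q (0, 1) (0, 1) :=
    fderiv_clm_apply_const_apply hg₂ _ _
  obtain ⟨u₁, u₂⟩ := u
  obtain ⟨v₁, v₂⟩ := v
  rw [hxx, hxy, hyy]
  conv_lhs => rw [hbasis u₁, hbasis v₁]
  simp only [map_add, map_smul, add_apply, smul_apply, smul_eq_mul, hsymm.eq (1, 0) (0, 1)]
  ring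

noncomputable def projXY : ℝ × ℝ × ℝ →L[ℝ] ℝ × ℝ :=
  (ContinuousLinearMap.id ℝ ℝ).prodMap (ContinuousLinearMap.fst ℝ ℝ ℝ)

@[simp]
theorem projXY_apply (p : ℝ × ℝ × ℝ) : projXY p = (p.1, p.2.1) := rfl

noncomputable def driftLinearPart (β₁₁ β₁₃ β₂₂ β₃₂ β₃₃ : ℝ) : ℝ × ℝ × ℝ →L[ℝ] ℝ × ℝ × ℝ :=
  (β₁₁ • ContinuousLinearMap.id ℝ ℝ).prodMap
    ((β₂₂ • ContinuousLinearMap.fst ℝ ℝ ℝ + β₁₃ • ContinuousLinearMap.snd ℝ ℝ ℝ).prod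
      (β₃₂ • ContinuousLinearMap.fst ℝ ℝ ℝ + β₃₃ • ContinuousLinearMap.snd ℝ ℝ ℝ))

theorem stmt1 (α₁ α₂ α₃ β₁₁ β₁₂ β₁₃ β₂₂ β₂₂' β₃₂ β₃₃ : ℝ)
    (γ₁ γ₂ : Fin 3 → ℝ) (E : ℝ × ℝ → ℝ) (hE : ContDiff ℝ 2 E)
    (f₀ : ℝ × ℝ × ℝ → ℝ × ℝ × ℝ)
    (hf₀ : f₀ = fun p => (α₁ + β₁₁ * p.1 + β₁₂ * E (p.1, p.2.1),
      α₂ + β₂₂ * p.2.1 + β₂₂' * E (p.1, p.2.1) + β₁₃ * p.2.2,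
      α₃ + β₃₂ * p.2.1 + β₃₃ * p.2.2))
    (f : Fin 3 → ℝ × ℝ × ℝ → ℝ × ℝ × ℝ)
    (hf : f = fun j _ => (γ₁ j, γ₂ j, (0 : ℝ)))
    (B : ℝ × ℝ × ℝ) (hB : B = (-β₁₂, -β₂₂', (0 : ℝ)))
    (Δ : Fin 3 → Fin 3 → ℝ × ℝ → ℝ)
    (hΔ : ∀ i j q, Δ i j q =
      γ₁ i * γ₁ j * pdx (pdx E) q + (γ₁ i * γ₂ j + γ₁ j * γ₂ i) * pdy (pdx E) q +
        γ₂ i * γ₂ j * pdy (pdy E) q) :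
    ∀ i j : Fin 3, ∀ p : ℝ × ℝ × ℝ,
      lieBracket ℝ (f i) (lieBracket ℝ f₀ (f j)) p = Δ i j (p.1, p.2.1) • B := by
  have hf₀' : f₀ = fun p => (α₁, α₂, α₃) + driftLinearPart β₁₁ β₁₃ β₂₂ β₃₂ β₃₃ p +
      E (projXY p) • (β₁₂, β₂₂', 0) := by
    subst hf₀
    ext p <;> simp [driftLinearPart] <;> ring
  intro i j p
  subst hf hB
  rw [hf₀', lieBracket_const_lieBracket_affine_add_smul hE,
    fderiv_fderiv_apply_eq_pdx_pdy hE, hΔ]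
  simp
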